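/- For the continuous q-Hermite polynomials H_n(cos x | q) (satisfying the difference equation V(x)(H_n(cos(x-iγ)) - H_n(cos x)) + V*(x)(H_n(cos(x+iγ)) - H_n(cos x)) = (q^{-n}-1)H_n(cos x) with V(x) = ((1-e^{2ix})(1-qe^{2ix}))^{-1} and γ = log q), the three-term style structure gives e^{inx} ₂φ₀(q^{-n}, 0; —; q; q^n e^{-2ix}) as an explicit solution; equivalently, H_n(cos x|q) = Σ_{k=0}^n [(q;q)_n / ((q;q)_k (q;q)_{n-k})] e^{i(n-2k)x} satisfies the above difference equation. -/

import Mathlib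

/-- The q-shifted factorial `(q;q)_m = ∏_{j=0}^{m-1} (1 - q·q^j)`. -/
noncomputable def qPoch (q : ℝ) (m : ℕ) : ℂ :=
  ∏ j ∈ Finset.range m, (1 - (q : ℂ) ^ (j + 1))

/-- The continuous q-Hermite polynomial
`H_n(cos x | q) = Σ_{k=0}^n (q;q)_n / ((q;q)_k (q;q)_{n-k}) e^{i(n-2k)x}`,
viewed as a function of `x ∈ ℂ`. -/
noncomputable def cqHermite (q : ℝ) (n : ℕ) (x : ℂ) : ℂ :=
  ∑ k ∈ Finset.range (n + 1),
    qPoch q n / (qPoch q k * qPoch q (n - k)) *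
      Complex.exp (Complex.I * ((n : ℂ) - 2 * (k : ℂ)) * x)

/-!
With `w = e^{-2ix}` one has `H_n(cos x | q) = e^{inx} h_n(w)`, where
`h_n(w) = Σ_k [n, k]_q w^k` is the Rogers–Szegő polynomial, and the shifts `x ↦ x ∓ iγ` become
the dilations `w ↦ q^{∓2} w`. The two q-Pascal rules for the Gaussian binomials give
`h_n(w) = w h_{n-1}(w) + h_{n-1}(qw)` and `h_n(qw) = h_{n-1}(qw) + qⁿ w h_{n-1}(w)`; combining
them at `w` and `qw` yields the dilation rule
`h_n(q²w) - qⁿ h_n(w) = (1 - qⁿ)(1 - qw) h_{n-1}(qw)`. Applied at `w` and at `w / q²`, it turns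
both differences of the equation into multiples of `h_{n-1}`, the factors `1 - qw` and `1 - q/w`
of `V*` and `V` cancel, and what is left is again the pair of Pascal rules.
-/

open Finset Complex

section QPochhammer

variable {q : ℝ}

@[simp]
lemma qPoch_zero (q : ℝ) : qPoch q 0 = 1 := rfl

lemma qPoch_succ (q : ℝ) (m : ℕ) : qPoch q (m + 1) = qPoch q m * (1 - (q : ℂ) ^ (m + 1)) :=
  prod_range_succ _ m

lemma one_sub_pow_succ_ne_zero (hq : |q| ≠ 1) (j : ℕ) :
    (1 : ℂ) - (q : ℂ) ^ (j + 1) ≠ 0 := by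
  refine sub_ne_zero.mpr fun h => hq ?_
  have hpow : q ^ (j + 1) = 1 := by exact_mod_cast h.symm
  exact (pow_eq_one_iff_of_nonneg (abs_nonneg q) j.succ_ne_zero).mp
    (by rw [← abs_pow, hpow, abs_one])

lemma qPoch_ne_zero (hq : |q| ≠ 1) (m : ℕ) : qPoch q m ≠ 0 :=
  prod_ne_zero_iff.mpr fun j _ => one_sub_pow_succ_ne_zero hq j

/-- `[n, k]_q`, written as in `cqHermite`; unlike `Nat.choose` it does not vanish for `k > n`. -/
noncomputable def qBinom (q : ℝ) (n k : ℕ) : ℂ :=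
  qPoch q n / (qPoch q k * qPoch q (n - k))

lemma qBinom_zero_right (hq : |q| ≠ 1) (n : ℕ) : qBinom q n 0 = 1 := by
  simp [qBinom, qPoch_ne_zero hq]

lemma qBinom_self (hq : |q| ≠ 1) (n : ℕ) : qBinom q n n = 1 := by
  simp [qBinom, qPoch_ne_zero hq]

lemma qBinom_succ_succ (hq : |q| ≠ 1) {n k : ℕ} (hk : k < n) :
    qBinom q (n + 1) (k + 1) = qBinom q n k + (q : ℂ) ^ (k + 1) * qBinom q n (k + 1) := by
  obtain ⟨m, rfl⟩ := Nat.exists_eq_add_of_lt hk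
  rw [qBinom, qBinom, qBinom, show k + m + 1 + 1 - (k + 1) = m + 1 by omega,
    show k + m + 1 - k = m + 1 by omega, show k + m + 1 - (k + 1) = m by omega,
    qPoch_succ q (k + m + 1), qPoch_succ q k, qPoch_succ q m]
  have := qPoch_ne_zero hq k
  have := qPoch_ne_zero hq m
  have := one_sub_pow_succ_ne_zero hq k
  have := one_sub_pow_succ_ne_zero hq m
  field_simp
  ring

lemma qBinom_succ_succ' (hq : |q| ≠ 1) {n k : ℕ} (hk : k < n) :
    qBinom q (n + 1) (k + 1) = (q : ℂ) ^ (n - k) * qBinom q n k + qBinom q n (k + 1) := by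
  obtain ⟨m, rfl⟩ := Nat.exists_eq_add_of_lt hk
  rw [qBinom, qBinom, qBinom, show k + m + 1 + 1 - (k + 1) = m + 1 by omega,
    show k + m + 1 - k = m + 1 by omega, show k + m + 1 - (k + 1) = m by omega,
    qPoch_succ q (k + m + 1), qPoch_succ q k, qPoch_succ q m]
  have := qPoch_ne_zero hq k
  have := qPoch_ne_zero hq m
  have := one_sub_pow_succ_ne_zero hq k
  have := one_sub_pow_succ_ne_zero hq m
  field_simp
  ring

lemma sum_range_qBinom_succ (hq : |q| ≠ 1) (n : ℕ) (f : ℕ → ℂ) :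
    ∑ k ∈ range (n + 2), qBinom q (n + 1) k * f k
      = ∑ k ∈ range (n + 1), qBinom q n k * (f (k + 1) + (q : ℂ) ^ k * f k) := by
  have hpascal : ∑ k ∈ range n, qBinom q (n + 1) (k + 1) * f (k + 1)
      = ∑ k ∈ range n, (qBinom q n k * f (k + 1)
          + qBinom q n (k + 1) * ((q : ℂ) ^ (k + 1) * f (k + 1))) :=
    sum_congr rfl fun k hk => by rw [qBinom_succ_succ hq (mem_range.mp hk)]; ring
  simp only [mul_add, sum_add_distrib]
  rw [sum_range_succ', sum_range_succ, hpascal, sum_add_distrib, sum_range_succ _ n,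
    sum_range_succ' (fun k => qBinom q n k * ((q : ℂ) ^ k * f k))]
  simp only [qBinom_self hq, qBinom_zero_right hq]
  ring

lemma sum_range_qBinom_succ' (hq : |q| ≠ 1) (n : ℕ) (f : ℕ → ℂ) :
    ∑ k ∈ range (n + 2), qBinom q (n + 1) k * f k
      = ∑ k ∈ range (n + 1), qBinom q n k * ((q : ℂ) ^ (n - k) * f (k + 1) + f k) := by
  have hpascal : ∑ k ∈ range n, qBinom q (n + 1) (k + 1) * f (k + 1)
      = ∑ k ∈ range n, (qBinom q n k * ((q : ℂ) ^ (n - k) * f (k + 1))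
          + qBinom q n (k + 1) * f (k + 1)) :=
    sum_congr rfl fun k hk => by rw [qBinom_succ_succ' hq (mem_range.mp hk)]; ring
  simp only [mul_add, sum_add_distrib]
  rw [sum_range_succ', sum_range_succ, hpascal, sum_add_distrib, sum_range_succ _ n,
    sum_range_succ' (fun k => qBinom q n k * f k)]
  simp only [qBinom_self hq, qBinom_zero_right hq, Nat.sub_self]
  ring

end QPochhammer

section RogersSzego

variable {q : ℝ}

noncomputable def rogersSzego (q : ℝ) (n : ℕ) (w : ℂ) : ℂ :=
  ∑ k ∈ range (n + 1), qBinom q n k * w ^ k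

@[simp]
lemma rogersSzego_zero (q : ℝ) (w : ℂ) : rogersSzego q 0 w = 1 := by
  simp [rogersSzego, qBinom]

lemma rogersSzego_succ (hq : |q| ≠ 1) (n : ℕ) (w : ℂ) :
    rogersSzego q (n + 1) w = w * rogersSzego q n w + rogersSzego q n (q * w) := by
  rw [rogersSzego, sum_range_qBinom_succ hq, rogersSzego, rogersSzego, mul_sum,
    ← sum_add_distrib]
  exact sum_congr rfl fun k _ => by ring

lemma rogersSzego_succ_mul (hq : |q| ≠ 1) (n : ℕ) (w : ℂ) :
    rogersSzego q (n + 1) (q * w)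
      = rogersSzego q n (q * w) + (q : ℂ) ^ (n + 1) * w * rogersSzego q n w := by
  rw [rogersSzego, sum_range_qBinom_succ' hq, rogersSzego, rogersSzego, mul_sum,
    ← sum_add_distrib]
  refine sum_congr rfl fun k hk => ?_
  have hkn : (q : ℂ) ^ (n - k) * (q : ℂ) ^ (k + 1) = (q : ℂ) ^ (n + 1) := by
    rw [← pow_add]; congr 1; have := mem_range.mp hk; omega
  linear_combination qBinom q n k * w ^ (k + 1) * hkn

lemma rogersSzego_sq_mul_sub (hq : |q| ≠ 1) (n : ℕ) (w : ℂ) :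
    rogersSzego q (n + 1) ((q : ℂ) ^ 2 * w) - (q : ℂ) ^ (n + 1) * rogersSzego q (n + 1) w
      = (1 - (q : ℂ) ^ (n + 1)) * (1 - q * w) * rogersSzego q n (q * w) := by
  have h₁ := rogersSzego_succ hq n w
  have h₂ := rogersSzego_succ hq n (q * w)
  have h₃ := rogersSzego_succ_mul hq n w
  have h₄ := rogersSzego_succ_mul hq n (q * w)
  rw [← mul_assoc, ← sq] at h₂ h₄
  linear_combination h₄ - h₂ + h₃ - (q : ℂ) ^ (n + 1) * h₁

theorem rogersSzego_difference_eq (hq₀ : q ≠ 0) (hq : |q| ≠ 1) (n : ℕ) {w : ℂ}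
    (hw : w ≠ 0) (hqw_inv : q * w⁻¹ ≠ 1) (hw1 : w ≠ 1) (hqw : q * w ≠ 1) :
    1 / ((1 - w⁻¹) * (1 - q * w⁻¹)) *
        ((q : ℂ) ^ n * rogersSzego q n (w / q ^ 2) - rogersSzego q n w)
      + 1 / ((1 - w) * (1 - q * w)) *
        (((q : ℂ) ^ n)⁻¹ * rogersSzego q n (q ^ 2 * w) - rogersSzego q n w)
      = (((q : ℂ) ^ n)⁻¹ - 1) * rogersSzego q n w := by
  rcases n with _ | n
  · simp
  have hq₀' : (q : ℂ) ≠ 0 := by exact_mod_cast hq₀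
  have hup :
      ((q : ℂ) ^ (n + 1))⁻¹ * rogersSzego q (n + 1) (q ^ 2 * w) - rogersSzego q (n + 1) w =
        (((q : ℂ) ^ (n + 1))⁻¹ - 1) * (1 - q * w) * rogersSzego q n (q * w) := by
    have := rogersSzego_sq_mul_sub hq n w
    field_simp
    linear_combination this
  have hdown : (q : ℂ) ^ (n + 1) * rogersSzego q (n + 1) (w / q ^ 2) - rogersSzego q (n + 1) w
      = (1 - (q : ℂ) ^ (n + 1)) * (w / q - 1) * rogersSzego q n (w / q) := by
    have := rogersSzego_sq_mul_sub hq n (w / q ^ 2)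
    rw [mul_div_cancel₀ _ (pow_ne_zero 2 hq₀'), show (q : ℂ) * (w / q ^ 2) = w / q by
      field_simp] at this
    linear_combination -this
  have hP₁ := rogersSzego_succ hq n w
  have hP₂ := rogersSzego_succ_mul hq n (w / q)
  rw [mul_div_cancel₀ _ hq₀'] at hP₂
  have hwq : w - q ≠ 0 :=
    sub_ne_zero.mpr fun h => hqw_inv (by rw [h, mul_inv_cancel₀ (h ▸ hw)])
  have hw1' : 1 - w ≠ 0 := sub_ne_zero.mpr hw1.symm
  have hqw' : 1 - w * q ≠ 0 := sub_ne_zero.mpr fun h => hqw (by rw [mul_comm, ← h])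
  rw [hup, hdown]
  calc _ = (((q : ℂ) ^ (n + 1))⁻¹ - 1) * (rogersSzego q n (q * w)
          - w * ((q : ℂ) ^ (n + 1) * (w / q) * rogersSzego q n (w / q))) / (1 - w) := by
        field_simp
        ring
    _ = (((q : ℂ) ^ (n + 1))⁻¹ - 1) * rogersSzego q (n + 1) w := by
        rw [div_eq_iff hw1']
        linear_combination (-(((q : ℂ) ^ (n + 1))⁻¹ - 1)) * hP₁
          + (((q : ℂ) ^ (n + 1))⁻¹ - 1) * w * hP₂

end RogersSzego

section ContinuousQHermite

variable {q : ℝ}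

lemma cqHermite_eq_exp_mul_rogersSzego (q : ℝ) (n : ℕ) (x : ℂ) :
    cqHermite q n x = exp (I * n * x) * rogersSzego q n (exp (-(2 * I * x))) := by
  rw [cqHermite, rogersSzego, mul_sum]
  refine sum_congr rfl fun k _ => ?_
  rw [← exp_nat_mul, mul_left_comm, ← exp_add, qBinom]
  congr 2
  ring

lemma cqHermite_sub_I_mul_log (hq : 0 < q) (n : ℕ) (x : ℂ) :
    cqHermite q n (x - I * Real.log q)
      = (q : ℂ) ^ n * exp (I * n * x) * rogersSzego q n (exp (-(2 * I * x)) / q ^ 2) := by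
  have hexp : exp (Real.log q) = q := by rw [← ofReal_exp, Real.exp_log hq]
  have h₁ : I * n * (x - I * Real.log q) = I * n * x + n * Real.log q := by
    linear_combination (-(n * Real.log q : ℂ)) * I_mul_I
  have h₂ : -(2 * I * (x - I * Real.log q)) = -(2 * I * x) - Real.log q - Real.log q := by
    linear_combination (2 * Real.log q : ℂ) * I_mul_I
  rw [cqHermite_eq_exp_mul_rogersSzego, h₁, h₂, exp_add, exp_sub, exp_sub, exp_nat_mul, hexp,
    div_div, ← sq]
  ring

lemma cqHermite_add_I_mul_log (hq : 0 < q) (n : ℕ) (x : ℂ) :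
    cqHermite q n (x + I * Real.log q)
      = ((q : ℂ) ^ n)⁻¹ * exp (I * n * x) * rogersSzego q n (q ^ 2 * exp (-(2 * I * x))) := by
  have hexp : exp (Real.log q) = q := by rw [← ofReal_exp, Real.exp_log hq]
  have h₁ : I * n * (x + I * Real.log q) = I * n * x - n * Real.log q := by
    linear_combination (n * Real.log q : ℂ) * I_mul_I
  have h₂ : -(2 * I * (x + I * Real.log q)) = Real.log q + Real.log q + -(2 * I * x) := by
    linear_combination (-(2 * Real.log q) : ℂ) * I_mul_I
  rw [cqHermite_eq_exp_mul_rogersSzego, h₁, h₂, exp_sub, exp_add, exp_add, exp_nat_mul, hexp,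
    ← sq]
  ring

end ContinuousQHermite

theorem cqHermite_difference_eq_general (q : ℝ) (hq0 : 0 < q) (hq1 : q < 1) (n : ℕ) (x : ℂ)
    (h2 : (q : ℂ) * Complex.exp (2 * Complex.I * x) ≠ 1)
    (h3 : Complex.exp (-(2 * Complex.I * x)) ≠ 1)
    (h4 : (q : ℂ) * Complex.exp (-(2 * Complex.I * x)) ≠ 1) :
    (1 / ((1 - Complex.exp (2 * Complex.I * x)) *
          (1 - (q : ℂ) * Complex.exp (2 * Complex.I * x)))) *
        (cqHermite q n (x - Complex.I * (Real.log q : ℂ)) - cqHermite q n x) +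
      (1 / ((1 - Complex.exp (-(2 * Complex.I * x))) *
          (1 - (q : ℂ) * Complex.exp (-(2 * Complex.I * x))))) *
        (cqHermite q n (x + Complex.I * (Real.log q : ℂ)) - cqHermite q n x) =
      ((q : ℂ) ^ (-(n : ℤ)) - 1) * cqHermite q n x := by
  have hinv : exp (2 * I * x) = (exp (-(2 * I * x)))⁻¹ := by rw [exp_neg, inv_inv]
  rw [hinv] at h2 ⊢
  rw [cqHermite_sub_I_mul_log hq0, cqHermite_add_I_mul_log hq0, cqHermite_eq_exp_mul_rogersSzego,
    zpow_neg, zpow_natCast]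
  have hq : |q| ≠ 1 := by rw [abs_of_pos hq0]; exact hq1.ne
  linear_combination exp (I * n * x) *
    rogersSzego_difference_eq hq0.ne' hq n (exp_ne_zero _) h2 h3 h4

/-- The continuous q-Hermite polynomials satisfy the difference equation
`V(x)(H_n(cos(x-iγ)) - H_n(cos x)) + V*(x)(H_n(cos(x+iγ)) - H_n(cos x))
  = (q^{-n}-1) H_n(cos x)` with `V(x) = ((1-e^{2ix})(1-qe^{2ix}))⁻¹` and `γ = log q`. -/
theorem cqHermite_difference_eq (q : ℝ) (hq0 : 0 < q) (hq1 : q < 1) (n : ℕ) (x : ℂ)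
    (h1 : Complex.exp (2 * Complex.I * x) ≠ 1)
    (h2 : (q : ℂ) * Complex.exp (2 * Complex.I * x) ≠ 1)
    (h3 : Complex.exp (-(2 * Complex.I * x)) ≠ 1)
    (h4 : (q : ℂ) * Complex.exp (-(2 * Complex.I * x)) ≠ 1) :
    (1 / ((1 - Complex.exp (2 * Complex.I * x)) *
          (1 - (q : ℂ) * Complex.exp (2 * Complex.I * x)))) *
        (cqHermite q n (x - Complex.I * (Real.log q : ℂ)) - cqHermite q n x) +
      (1 / ((1 - Complex.exp (-(2 * Complex.I * x))) *
          (1 - (q : ℂ) * Complex.exp (-(2 * Complex.I * x))))) *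
        (cqHermite q n (x + Complex.I * (Real.log q : ℂ)) - cqHermite q n x) =
      ((q : ℂ) ^ (-(n : ℤ)) - 1) * cqHermite q n x :=
  cqHermite_difference_eq_general q hq0 hq1 n x h2 h3 h4
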